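/- arXiv:1505.05178 — 3 statements merged into one kernel-verified Lean document; each statement's English description precedes it below -/
import Mathlib

section
/- Let A be an n×n matrix with entries in {0,1} such that the number of pairs (i,j) with a_{ij}=1 is at least (99/100)n². Then there exists a set Z ⊆ {1,…,n} with |Z| ≥ 4n/5 such that for every k ≥ 2 and every i,j ∈ Z, the (i,j) entry of A^k satisfies (A^k)_{ij} ≥ (4/5)·(3/5)^{k-2}·n^{k-1}. -/
/-!
Call a row good if it has at most `δN` zeros. Since `A` has at most `δ²N²` zeros, Markov's
inequality leaves at most `δN` bad rows, and likewise for columns; let `Z` be the set of indices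
that are both a good row and a good column, so `|Z| ≥ (1 - 2δ)N`. For `i, j ∈ Z` the ones of
row `i` and of column `j` overlap in at least `(1 - 2δ)N` places, which bounds `(A²)ᵢⱼ`, and
row `i` has at least `(1 - 3δ)N` ones inside `Z`, so `(A^(k+1))ᵢⱼ ≥ ∑_{l ∈ Z, Aᵢₗ = 1} (A^k)ₗⱼ`
gains a factor `(1 - 3δ)N` at each step. The theorem is the case `δ = 1/10`.
-/

open Finset

namespace Finset

variable {ι : Type*}

lemma card_add_card_le_card_inter_add_card [Fintype ι] [DecidableEq ι] (s t : Finset ι) :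
    #s + #t ≤ #(s ∩ t) + Fintype.card ι := by
  have := card_union_add_card_inter s t
  have := card_le_univ (s ∪ t)
  omega

lemma card_filter_lt_mul_le_sum {R : Type*} [Semiring R] [LinearOrder R] [IsOrderedRing R]
    {s : Finset ι} {f : ι → R} (hf : ∀ i ∈ s, 0 ≤ f i) (t : R) :
    #{i ∈ s | t < f i} * t ≤ ∑ i ∈ s, f i :=
  calc (#{i ∈ s | t < f i} : R) * t = #{i ∈ s | t < f i} • t := (nsmul_eq_mul _ _).symm
    _ ≤ ∑ i ∈ s with t < f i, f i := card_nsmul_le_sum _ _ _ fun _ hi => (mem_filter.1 hi).2.le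
    _ ≤ ∑ i ∈ s, f i := sum_le_sum_of_subset_of_nonneg (filter_subset _ _) fun i hi _ => hf i hi

end Finset

namespace Matrix

variable {ι R : Type*} [Fintype ι]

section Semiring

variable [Semiring R] [DecidableEq R] (A : Matrix ι ι R)

def ones : Finset (ι × ι) := {p | A p.1 p.2 = 1}

def rowOnes (i : ι) : Finset ι := {j | A i j = 1}

lemma sum_card_rowOnes : ∑ i, #(A.rowOnes i) = #A.ones := by
  simp only [rowOnes, ones, card_filter, ← univ_product_univ, sum_product]

lemma card_ones_transpose : #Aᵀ.ones = #A.ones :=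
  card_nbij' Prod.swap Prod.swap (fun _ hp => mem_filter.2 ⟨mem_univ _, (mem_filter.1 hp).2⟩)
    (fun _ hp => mem_filter.2 ⟨mem_univ _, (mem_filter.1 hp).2⟩) (fun _ _ => rfl) (fun _ _ => rfl)

lemma mul_self_apply_eq_card_inter [DecidableEq ι] (h01 : ∀ i j, A i j = 0 ∨ A i j = 1)
    (i j : ι) : (A * A) i j = #(A.rowOnes i ∩ Aᵀ.rowOnes j) := by
  rw [mul_apply, rowOnes, rowOnes, ← filter_and, card_eq_sum_ones, Nat.cast_sum, sum_filter]
  refine sum_congr rfl fun l _ => ?_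
  rcases h01 i l with h | h <;> rcases h01 l j with h' | h' <;> simp [h, h']

variable [PartialOrder R] [IsOrderedRing R]

lemma sum_rowOnes_le_mul_apply {A B : Matrix ι ι R} (hA : ∀ i j, 0 ≤ A i j)
    (hB : ∀ i j, 0 ≤ B i j) (i j : ι) : ∑ l ∈ A.rowOnes i, B l j ≤ (A * B) i j := by
  rw [mul_apply]
  calc ∑ l ∈ A.rowOnes i, B l j = ∑ l ∈ A.rowOnes i, A i l * B l j :=
        sum_congr rfl fun l hl => by rw [(mem_filter.1 hl).2, one_mul]
    _ ≤ ∑ l, A i l * B l j :=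
        sum_le_sum_of_subset_of_nonneg (subset_univ _) fun l _ _ => mul_nonneg (hA i l) (hB l j)

lemma mul_pow_le_pow_add_two_apply [DecidableEq ι] {A : Matrix ι ι R} (hA : ∀ i j, 0 ≤ A i j)
    {Z : Finset ι} {c r : R} (hc : 0 ≤ c) (hr : 0 ≤ r) (hsq : ∀ i ∈ Z, ∀ j ∈ Z, c ≤ (A ^ 2) i j)
    (hrow : ∀ i ∈ Z, r ≤ #(A.rowOnes i ∩ Z)) (m : ℕ) :
    ∀ i ∈ Z, ∀ j ∈ Z, c * r ^ m ≤ (A ^ (m + 2)) i j := by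
  induction m with
  | zero => simpa using hsq
  | succ m ih =>
    intro i hi j hj
    calc c * r ^ (m + 1) = c * r ^ m * r := by rw [pow_succ, mul_assoc]
      _ ≤ c * r ^ m * #(A.rowOnes i ∩ Z) :=
          mul_le_mul_of_nonneg_left (hrow i hi) (mul_nonneg hc (pow_nonneg hr m))
      _ = #(A.rowOnes i ∩ Z) • (c * r ^ m) := (nsmul_eq_mul' _ _).symm
      _ ≤ ∑ l ∈ A.rowOnes i ∩ Z, (A ^ (m + 2)) l j :=
          card_nsmul_le_sum _ _ _ fun l hl => ih l (mem_inter.1 hl).2 j hj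
      _ ≤ ∑ l ∈ A.rowOnes i, (A ^ (m + 2)) l j :=
          sum_le_sum_of_subset_of_nonneg inter_subset_left fun l _ _ => pow_apply_nonneg hA _ l j
      _ ≤ (A * A ^ (m + 2)) i j := sum_rowOnes_le_mul_apply hA (pow_apply_nonneg hA _) i j
      _ = (A ^ (m + 1 + 2)) i j := by rw [← pow_succ']

end Semiring

section Field

variable [Field R] [LinearOrder R] [IsStrictOrderedRing R] (A : Matrix ι ι R)

def goodRows (δ : R) : Finset ι := {i | (1 - δ) * Fintype.card ι ≤ (#(A.rowOnes i) : R)}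

lemma card_goodRows_ge {δ : R} (hδ : 0 < δ)
    (h : (1 - δ ^ 2) * Fintype.card ι ^ 2 ≤ #A.ones) :
    (1 - δ) * Fintype.card ι ≤ #(A.goodRows δ) := by
  set N := Fintype.card ι
  set bad : Finset ι := {i | ¬ (1 - δ) * N ≤ #(A.rowOnes i)}
  have hbad_eq : bad = ({i | δ * N < N - #(A.rowOnes i)} : Finset ι) :=
    filter_congr fun i _ => by rw [not_le]; constructor <;> intro <;> linarith
  have hdeficit : ∑ i, ((N : R) - #(A.rowOnes i)) = N ^ 2 - #A.ones := by
    rw [sum_sub_distrib, sum_const, card_univ, nsmul_eq_mul, ← Nat.cast_sum, sum_card_rowOnes,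
      sq]
  have hmarkov : #bad * (δ * N) ≤ δ * N * (δ * N) := by
    rw [hbad_eq]
    calc _ ≤ ∑ i, ((N : R) - #(A.rowOnes i)) := card_filter_lt_mul_le_sum
            (fun i _ => sub_nonneg.2 (by exact_mod_cast card_le_univ _)) _
      _ ≤ δ * N * (δ * N) := by rw [hdeficit]; linarith
  have hbad : (#bad : R) ≤ δ * N := by
    rcases (Nat.cast_nonneg N : (0 : R) ≤ N).eq_or_lt with hN | hN
    · have : (#bad : R) ≤ N := by exact_mod_cast card_le_univ bad
      rw [← hN] at this ⊢
      linarith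
    · exact le_of_mul_le_mul_right hmarkov (mul_pos hδ hN)
  have hsplit : (#(A.goodRows δ) : R) + #bad = N := by
    exact_mod_cast card_filter_add_card_filter_not (s := univ) _
  linarith

theorem exists_card_ge_and_le_pow_add_two_apply [DecidableEq ι]
    (h01 : ∀ i j, A i j = 0 ∨ A i j = 1) {δ : R} (hδ : 0 < δ) (hδ' : 3 * δ ≤ 1)
    (h : (1 - δ ^ 2) * Fintype.card ι ^ 2 ≤ #A.ones) :
    ∃ Z : Finset ι, (1 - 2 * δ) * Fintype.card ι ≤ #Z ∧ ∀ m : ℕ, ∀ i ∈ Z, ∀ j ∈ Z,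
      (1 - 2 * δ) * Fintype.card ι * ((1 - 3 * δ) * Fintype.card ι) ^ m ≤ (A ^ (m + 2)) i j := by
  set N := Fintype.card ι
  have hinter (s t : Finset ι) : (#s : R) + #t - N ≤ #(s ∩ t) := by
    have : (#s + #t : R) ≤ #(s ∩ t) + N := by
      exact_mod_cast card_add_card_le_card_inter_add_card s t
    linarith
  set Z := A.goodRows δ ∩ Aᵀ.goodRows δ
  have hZ : (1 - 2 * δ) * N ≤ (#Z : R) := by
    have hrows := A.card_goodRows_ge hδ h
    have hcols := Aᵀ.card_goodRows_ge hδ (by rwa [card_ones_transpose])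
    linarith [hinter (A.goodRows δ) (Aᵀ.goodRows δ)]
  have hA : ∀ i j, 0 ≤ A i j := fun i j => by rcases h01 i j with h | h <;> simp [h]
  refine ⟨Z, hZ, mul_pow_le_pow_add_two_apply hA (mul_nonneg (by linarith) N.cast_nonneg)
    (mul_nonneg (by linarith) N.cast_nonneg) (fun i hi j hj => ?_) (fun i hi => ?_)⟩
  · have hi := (mem_filter.1 (mem_inter.1 hi).1).2
    have hj := (mem_filter.1 (mem_inter.1 hj).2).2
    rw [sq, mul_self_apply_eq_card_inter A h01]
    linarith [hinter (A.rowOnes i) (Aᵀ.rowOnes j)]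
  · have hi := (mem_filter.1 (mem_inter.1 hi).1).2
    linarith [hinter (A.rowOnes i) Z]

end Field

end Matrix

/-- If an `n × n` 0-1 matrix has at least `(99/100) n²` entries equal to `1`,
then there is a set `Z ⊆ {1,…,n}` with `|Z| ≥ 4n/5` such that for every `k ≥ 2` and all
`i, j ∈ Z` we have `(A^k)_{ij} ≥ (4/5)·(3/5)^(k-2)·n^(k-1)`. -/
theorem stmt0 (n : ℕ) (A : Matrix (Fin n) (Fin n) ℝ)
    (h01 : ∀ i j, A i j = 0 ∨ A i j = 1)
    (hcard : (99 / 100 : ℝ) * (n : ℝ) ^ 2 ≤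
      ((Finset.univ.filter fun p : Fin n × Fin n => A p.1 p.2 = 1).card : ℝ)) :
    ∃ Z : Finset (Fin n), 4 * (n : ℝ) / 5 ≤ (Z.card : ℝ) ∧
      ∀ k : ℕ, 2 ≤ k → ∀ i ∈ Z, ∀ j ∈ Z,
        (4 / 5 : ℝ) * (3 / 5 : ℝ) ^ (k - 2) * (n : ℝ) ^ (k - 1) ≤ (A ^ k) i j := by
  have hones : (1 - (1 / 10 : ℝ) ^ 2) * Fintype.card (Fin n) ^ 2 ≤ #A.ones := by
    rw [Fintype.card_fin, show (1 - (1 / 10 : ℝ) ^ 2) = 99 / 100 by norm_num]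
    exact hcard
  obtain ⟨Z, hZ, hpow⟩ :=
    A.exists_card_ge_and_le_pow_add_two_apply h01 (by norm_num) (by norm_num) hones
  rw [Fintype.card_fin] at hZ hpow
  refine ⟨Z, by linarith, fun k hk i hi j hj => ?_⟩
  obtain ⟨m, rfl⟩ := Nat.exists_eq_add_of_le' hk
  calc (4 / 5 : ℝ) * (3 / 5) ^ (m + 2 - 2) * n ^ (m + 2 - 1) = 4 / 5 * n * (3 / 5 * n) ^ m := by
        rw [Nat.add_sub_cancel, show m + 2 - 1 = m + 1 by omega]; ring
    _ ≤ (1 - 2 * (1 / 10)) * n * ((1 - 3 * (1 / 10)) * n) ^ m := by gcongr <;> norm_num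
    _ ≤ (A ^ (m + 2)) i j := hpow m i hi j hj
end

section
/- Let A be an n×n matrix with entries in {0,1} such that the number of pairs (i,j) with a_{ij}=1 is at least (99/100)n². Then for every k ≥ 2, the trace of A^k satisfies tr(A^k) ≥ (n/2)^k. -/
/-!
Call a row or column good if together they contain at most `n/5` zeros. Since `A` has at most
`n²/100` zeros, Markov's inequality leaves at most `n/10` bad indices, so the set `S` of good
indices has at least `9n/10` elements. Inside `S` every row has at least `7n/10 ≥ n/2` ones, and
for `y, i ∈ S` the row `y` and the column `i` share at least `n - 2n/5 ≥ n/2` ones, so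
`(A²)_{yi} ≥ n/2`. Counting walks `i → ⋯ → y → ⋯ → i` that stay in `S` for `k - 2` steps and then
close up in two steps gives `(Aᵏ)_{ii} ≥ (n/2)^(k-1)` for `i ∈ S`, and summing over `S` gives
`tr(Aᵏ) ≥ (n/2)^k`.
-/

open Finset

namespace Matrix

variable {ι m n R : Type*} [Fintype ι]

section OrderedSemiring

variable [Semiring R] [PartialOrder R] [IsOrderedRing R]

theorem sum_mul_le_mul_apply {M : Matrix m ι R} {N : Matrix ι n R} {S : Finset ι} {i : m}
    {j : n} {d : R} (hM : ∀ y, 0 ≤ M i y) (hN : ∀ y, 0 ≤ N y j)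
    (hS : ∀ y ∈ S, d ≤ N y j) :
    (∑ y ∈ S, M i y) * d ≤ (M * N) i j := by
  rw [sum_mul, mul_apply]
  calc ∑ y ∈ S, M i y * d ≤ ∑ y ∈ S, M i y * N y j :=
        sum_le_sum fun y hy => mul_le_mul_of_nonneg_left (hS y hy) (hM y)
    _ ≤ ∑ y, M i y * N y j :=
        sum_le_sum_of_subset_of_nonneg (subset_univ S) fun y _ _ => mul_nonneg (hM y) (hN y)

theorem pow_mul_le_pow_mul_apply [DecidableEq ι] {A B : Matrix ι ι R} {S : Finset ι} {j : ι}
    {c d : R} (hA : ∀ i j, 0 ≤ A i j) (hB : ∀ y, 0 ≤ B y j) (hc : 0 ≤ c) (hd : 0 ≤ d)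
    (hrow : ∀ y ∈ S, c ≤ ∑ x ∈ S, A y x) (hBS : ∀ y ∈ S, d ≤ B y j) (q : ℕ) :
    ∀ i ∈ S, c ^ q * d ≤ (A ^ q * B) i j := by
  induction q generalizing B d with
  | zero => simpa using hBS
  | succ q ih =>
    have hAB : ∀ y ∈ S, c * d ≤ (A * B) y j := fun y hy =>
      (mul_le_mul_of_nonneg_right (hrow y hy) hd).trans
        (sum_mul_le_mul_apply (hA y) hB hBS)
    have hAB₀ : ∀ y, 0 ≤ (A * B) y j := fun y =>
      sum_nonneg fun x _ => mul_nonneg (hA y x) (hB x)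
    intro i hi
    rw [pow_succ c, mul_assoc, pow_succ A, Matrix.mul_assoc]
    exact ih hAB₀ (mul_nonneg hc hd) hAB i hi

theorem card_mul_le_trace {M : Matrix ι ι R} {S : Finset ι} {d : R} (hM : ∀ i, 0 ≤ M i i)
    (hS : ∀ i ∈ S, d ≤ M i i) : #S * d ≤ M.trace := by
  calc (#S : R) * d = #S • d := (nsmul_eq_mul _ _).symm
    _ ≤ ∑ i ∈ S, M i i := card_nsmul_le_sum S _ d hS
    _ ≤ ∑ i, M i i := sum_le_sum_of_subset_of_nonneg (subset_univ S) fun i _ _ => hM i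

theorem pow_le_trace_pow [DecidableEq ι] {A : Matrix ι ι R} {S : Finset ι} {c : R}
    (hA : ∀ i j, 0 ≤ A i j) (hc : 0 ≤ c) (hcard : c ≤ #S) (hrow : ∀ y ∈ S, c ≤ ∑ x ∈ S, A y x)
    (hsq : ∀ y ∈ S, ∀ i ∈ S, c ≤ (A ^ 2) y i) {k : ℕ} (hk : 2 ≤ k) :
    c ^ k ≤ (A ^ k).trace := by
  obtain ⟨q, rfl⟩ : ∃ q, k = q + 2 := ⟨k - 2, by omega⟩
  have hdiag : ∀ i ∈ S, c ^ q * c ≤ (A ^ (q + 2)) i i := fun i hi => by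
    rw [pow_add]
    exact pow_mul_le_pow_mul_apply hA (fun y => pow_apply_nonneg hA 2 y i) hc hc hrow
      (fun y hy => hsq y hy i hi) q i hi
  calc c ^ (q + 2) = c * (c ^ q * c) := by rw [pow_succ', pow_succ]
    _ ≤ #S * (c ^ q * c) := mul_le_mul_of_nonneg_right hcard (by positivity)
    _ ≤ (A ^ (q + 2)).trace := card_mul_le_trace (fun i => pow_apply_nonneg hA _ i i) hdiag

theorem card_filter_lt_mul_le_sum [DecidableLT R] {f : ι → R} (hf : ∀ i, 0 ≤ f i) (t : R) :
    #{i | t < f i} * t ≤ ∑ i, f i := by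
  calc (#{i | t < f i} : R) * t = #{i | t < f i} • t := (nsmul_eq_mul _ _).symm
    _ ≤ ∑ i ∈ {i | t < f i}, f i := card_nsmul_le_sum _ _ t fun i hi => (mem_filter.1 hi).2.le
    _ ≤ ∑ i, f i := sum_le_sum_of_subset_of_nonneg (subset_univ _) fun i _ _ => hf i

end OrderedSemiring

section Deficit

variable [CommRing R]

/-- For a `0`-`1` matrix, the number of zeros in row `i`. -/
def rowDeficit [Fintype n] (A : Matrix m n R) (i : m) : R := ∑ j, (1 - A i j)

theorem rowDeficit_eq [Fintype n] (A : Matrix m n R) (i : m) :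
    rowDeficit A i = Fintype.card n - ∑ j, A i j := by
  simp [rowDeficit, sum_sub_distrib]

theorem sum_rowDeficit [Fintype m] [Fintype n] (A : Matrix m n R) :
    ∑ i, rowDeficit A i = Fintype.card m * Fintype.card n - ∑ i, ∑ j, A i j := by
  simp [rowDeficit_eq, sum_sub_distrib]

theorem sum_rowDeficit_transpose [Fintype m] [Fintype n] (A : Matrix m n R) :
    ∑ j, rowDeficit Aᵀ j = Fintype.card m * Fintype.card n - ∑ i, ∑ j, A i j := by
  rw [sum_rowDeficit, mul_comm]
  simp only [transpose_apply]
  rw [sum_comm]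

theorem card_filter_eq_one_eq_sum [Fintype m] [Fintype n] [DecidableEq R] {A : Matrix m n R}
    (h01 : ∀ i j, A i j = 0 ∨ A i j = 1) :
    (#{p : m × n | A p.1 p.2 = 1} : R) = ∑ i, ∑ j, A i j := by
  rw [natCast_card_filter, Fintype.sum_prod_type]
  refine sum_congr rfl fun i _ => sum_congr rfl fun j _ => ?_
  by_cases h : A i j = 1
  · rw [if_pos h, h]
  · rw [if_neg h, (h01 i j).resolve_right h]

variable [LinearOrder R] [IsStrictOrderedRing R]

theorem rowDeficit_nonneg [Fintype n] {A : Matrix m n R} {i : m} (h : ∀ j, A i j ≤ 1) :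
    0 ≤ rowDeficit A i :=
  sum_nonneg fun j _ => sub_nonneg.2 (h j)

theorem card_sub_rowDeficit_le_sum [Fintype n] {A : Matrix m n R} {i : m} (h : ∀ j, A i j ≤ 1)
    (S : Finset n) : #S - rowDeficit A i ≤ ∑ j ∈ S, A i j := by
  have : ∑ j ∈ S, (1 - A i j) ≤ rowDeficit A i :=
    sum_le_sum_of_subset_of_nonneg (subset_univ S) fun j _ _ => sub_nonneg.2 (h j)
  simp only [sum_sub_distrib, sum_const, nsmul_one] at this
  linarith

theorem card_sub_rowDeficit_sub_le_mul_apply {M : Matrix m ι R} {N : Matrix ι n R} {y : m}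
    {i : n} (hM : ∀ x, M y x ≤ 1) (hN : ∀ x, N x i ≤ 1) :
    Fintype.card ι - rowDeficit M y - rowDeficit Nᵀ i ≤ (M * N) y i := by
  have hpair : ∀ x, M y x + N x i - 1 ≤ M y x * N x i := fun x => by
    nlinarith [mul_nonneg (sub_nonneg.2 (hM x)) (sub_nonneg.2 (hN x))]
  calc Fintype.card ι - rowDeficit M y - rowDeficit Nᵀ i = ∑ x, (M y x + N x i - 1) := by
        simp [rowDeficit_eq, sum_sub_distrib, sum_add_distrib]; ring
    _ ≤ (M * N) y i := sum_le_sum fun x _ => hpair x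

end Deficit

theorem nine_div_ten_mul_card_le_card_filter_rowDeficit [Field R] [LinearOrder R]
    [IsStrictOrderedRing R] {A : Matrix ι ι R} (hA : ∀ i j, A i j ≤ 1)
    (hdense : 99 / 100 * (Fintype.card ι : R) ^ 2 ≤ ∑ i, ∑ j, A i j) :
    9 / 10 * (Fintype.card ι : R) ≤
      #{i | rowDeficit A i + rowDeficit Aᵀ i ≤ Fintype.card ι / 5} := by
  obtain ⟨N, hN⟩ : ∃ N : R, N = Fintype.card ι := ⟨_, rfl⟩
  rw [← hN] at hdense ⊢
  set δ : ι → R := fun i => rowDeficit A i + rowDeficit Aᵀ i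
  have hδ : ∀ i, 0 ≤ δ i := fun i =>
    add_nonneg (rowDeficit_nonneg (hA i)) (rowDeficit_nonneg (A := Aᵀ) fun j => hA j i)
  have hsum : ∑ i, δ i ≤ N ^ 2 / 50 := by
    rw [sum_add_distrib, sum_rowDeficit, sum_rowDeficit_transpose, ← hN]
    linarith
  have hbad : (#{i | N / 5 < δ i} : R) * (N / 5) ≤ N ^ 2 / 50 :=
    (card_filter_lt_mul_le_sum hδ _).trans hsum
  have hbad_le : (#{i | N / 5 < δ i} : R) ≤ N := by
    rw [hN]
    exact_mod_cast card_le_univ _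
  have hsplit : (#{i | δ i ≤ N / 5} : R) + #{i | N / 5 < δ i} = N := by
    simp only [← not_le]
    rw [hN]
    exact_mod_cast card_filter_add_card_filter_not _
  nlinarith

end Matrix

open Matrix

/-- If an `n × n` 0-1 matrix has at least `(99/100) n²` entries equal to `1`,
then for every `k ≥ 2` the trace of `A^k` satisfies `tr(A^k) ≥ (n/2)^k`. -/
theorem stmt1 (n : ℕ) (A : Matrix (Fin n) (Fin n) ℝ)
    (h01 : ∀ i j, A i j = 0 ∨ A i j = 1)
    (hcard : (99 / 100 : ℝ) * (n : ℝ) ^ 2 ≤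
      ((Finset.univ.filter fun p : Fin n × Fin n => A p.1 p.2 = 1).card : ℝ)) :
    ∀ k : ℕ, 2 ≤ k → ((n : ℝ) / 2) ^ k ≤ Matrix.trace (A ^ k) := by
  classical
  intro k hk
  have hA₀ : ∀ i j, 0 ≤ A i j := fun i j => by rcases h01 i j with h | h <;> simp [h]
  have hA₁ : ∀ i j, A i j ≤ 1 := fun i j => by rcases h01 i j with h | h <;> simp [h]
  have hS := nine_div_ten_mul_card_le_card_filter_rowDeficit hA₁
    (by rwa [Fintype.card_fin, ← card_filter_eq_one_eq_sum h01])
  rw [Fintype.card_fin] at hS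
  set S : Finset (Fin n) := {i | rowDeficit A i + rowDeficit Aᵀ i ≤ n / 5}
  have hgood : ∀ i ∈ S, rowDeficit A i ≤ n / 5 ∧ rowDeficit Aᵀ i ≤ n / 5 := fun i hi => by
    have := (mem_filter.1 hi).2
    have := rowDeficit_nonneg (hA₁ i)
    have := rowDeficit_nonneg (A := Aᵀ) fun j => hA₁ j i
    constructor <;> linarith
  refine pow_le_trace_pow (S := S) hA₀ (by positivity) (by linarith) (fun y hy => ?_)
    (fun y hy i hi => ?_) hk
  · linarith [card_sub_rowDeficit_le_sum (hA₁ y) S, (hgood y hy).1]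
  · have := card_sub_rowDeficit_sub_le_mul_apply (hA₁ y) (fun x => hA₁ x i)
    rw [Fintype.card_fin] at this
    rw [sq]
    linarith [(hgood y hy).1, (hgood i hi).2]
end

section
/- Let E be a subset of a metric space and I a compact subset of ℝ with upper box-counting dimension D(I). Then HD(E × I) ≤ HD(E) + D(I), where the product carries the max (or equivalent product) metric. In particular, if I is a nondegenerate compact interval, HD(E × I) ≤ HD(E) + 1. -/
/-!
Take `s > HD(E)` and `d > D(I)`. Cover `E` by sets `Uₙ` with `∑ diam (Uₙ) ^ s` small, and cover
`I` by at most `ρₙ ^ (-d)` balls of radius `ρₙ ≈ diam Uₙ`. The products of `Uₙ` with these balls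
have diameter at most `2 ρₙ`, so they contribute at most
`ρₙ ^ (-d) (2 ρₙ) ^ (s + d) = 2 ^ (s + d) ρₙ ^ s` to the `(s + d)`-dimensional Hausdorff sum. Hence `μH[s + d] (E × I) ≤ 2 ^ (s + d) μH[s] E = 0`
and `HD(E × I) ≤ s + d`. A bounded interval needs only `O(1/δ)` balls of radius `δ`, so `D ≤ 1`.
-/

/-- Covering number: the least cardinality of a finite set of centers of `δ`-balls
covering `s ⊆ ℝ` (and `⊤` if no finite cover exists). -/
noncomputable def coveringNumber (δ : ℝ) (s : Set ℝ) : ℕ∞ :=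
  sInf ((fun t : Finset ℝ => (t.card : ℕ∞)) ''
    {t : Finset ℝ | s ⊆ ⋃ x ∈ t, Metric.ball x δ})

/-- Upper box-counting (Minkowski) dimension of a subset of `ℝ`:
`limsup_{δ → 0⁺} log N(δ) / log (1/δ)`. -/
noncomputable def upperBoxDim (s : Set ℝ) : ℝ :=
  Filter.limsup (fun δ : ℝ => Real.log ((coveringNumber δ s).toNat : ℝ) / Real.log (1 / δ))
    (nhdsWithin 0 (Set.Ioi 0))

open Set Filter Topology MeasureTheory ENNReal NNReal
open Metric (ball ediam)

section CoveringNumber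

variable {s : Set ℝ} {δ : ℝ}

lemma coveringNumber_le_card {t : Finset ℝ} (h : s ⊆ ⋃ x ∈ t, ball x δ) :
    coveringNumber δ s ≤ t.card :=
  sInf_le ⟨t, h, rfl⟩

lemma exists_finset_card_eq_coveringNumber (h : coveringNumber δ s ≠ ⊤) :
    ∃ t : Finset ℝ, s ⊆ ⋃ x ∈ t, ball x δ ∧ (t.card : ℕ∞) = coveringNumber δ s := by
  have hne : ((fun t : Finset ℝ => (t.card : ℕ∞)) '' {t | s ⊆ ⋃ x ∈ t, ball x δ}).Nonempty := by
    by_contra hempty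
    exact h (by rw [coveringNumber, not_nonempty_iff_eq_empty.1 hempty]; exact sInf_empty)
  obtain ⟨t, ht, heq⟩ := csInf_mem hne
  exact ⟨t, ht, heq⟩

lemma coveringNumber_le_of_subset_Icc {a b : ℝ} (hδ : 0 < δ) (h : s ⊆ Icc a b) :
    coveringNumber δ s ≤ ⌊(b - a) / δ⌋₊ + 1 := by
  set n := ⌊(b - a) / δ⌋₊
  have hcover : s ⊆ ⋃ x ∈ (Finset.range (n + 1)).image (fun k : ℕ => a + δ * k), ball x δ := by
    intro y hy
    obtain ⟨hay, hyb⟩ := h hy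
    set k := ⌊(y - a) / δ⌋₊
    have hkn : k ≤ n := Nat.floor_le_floor (by gcongr)
    have hk : (k : ℝ) ≤ (y - a) / δ := Nat.floor_le (div_nonneg (by linarith) hδ.le)
    have hk' : (y - a) / δ < k + 1 := Nat.lt_floor_add_one _
    rw [le_div_iff₀ hδ] at hk
    rw [div_lt_iff₀ hδ] at hk'
    refine mem_iUnion₂_of_mem (Finset.mem_image_of_mem _ (Finset.mem_range_succ_iff.2 hkn)) ?_
    rw [Metric.mem_ball, Real.dist_eq, abs_lt]
    constructor <;> linarith
  refine (coveringNumber_le_card hcover).trans ?_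
  exact_mod_cast Finset.card_image_le.trans (Finset.card_range _).le

lemma coveringNumber_ne_top (hs : Bornology.IsBounded s) (hδ : 0 < δ) : coveringNumber δ s ≠ ⊤ := by
  obtain ⟨R, hR⟩ := hs.subset_closedBall 0
  rw [Real.closedBall_eq_Icc] at hR
  exact ne_top_of_le_ne_top (by exact_mod_cast ENat.natCast_ne_top _)
    (coveringNumber_le_of_subset_Icc hδ hR)

lemma exists_log_coveringNumber_le (hs : Bornology.IsBounded s) :
    ∃ C, ∀ δ ∈ Ioo (0 : ℝ) 1,
      Real.log (coveringNumber δ s).toNat ≤ C + Real.log (1 / δ) := by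
  obtain ⟨R, hR0, hR⟩ := hs.subset_closedBall_lt 0 0
  rw [Real.closedBall_eq_Icc, zero_sub, zero_add] at hR
  refine ⟨Real.log (2 * R + 1), fun δ ⟨hδ0, hδ1⟩ => ?_⟩
  have hN : ((coveringNumber δ s).toNat : ℝ) ≤ (2 * R + 1) / δ := by
    have hfloor := ENat.toNat_le_of_le_natCast (coveringNumber_le_of_subset_Icc hδ0 hR)
    calc ((coveringNumber δ s).toNat : ℝ) ≤ ⌊(R - -R) / δ⌋₊ + 1 := by exact_mod_cast hfloor
      _ ≤ (R - -R) / δ + 1 := by gcongr; exact Nat.floor_le (div_nonneg (by linarith) hδ0.le)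
      _ ≤ (2 * R + 1) / δ := by
        rw [sub_neg_eq_add, ← two_mul, add_div, add_le_add_iff_left, le_div_iff₀ hδ0, one_mul]
        exact hδ1.le
  rw [← Real.log_mul (by positivity) (by positivity), ← div_eq_mul_one_div]
  rcases eq_or_ne (coveringNumber δ s).toNat 0 with h0 | h0
  · rw [h0, Nat.cast_zero, Real.log_zero]
    exact Real.log_nonneg ((one_le_div hδ0).2 (by linarith))
  · exact Real.log_le_log (by positivity) hN

end CoveringNumber

section BoxDimension

variable {s : Set ℝ}

lemma tendsto_one_add_div_log_one_div (C : ℝ) :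
    Tendsto (fun δ : ℝ => 1 + C / Real.log (1 / δ)) (𝓝[>] 0) (𝓝 1) := by
  have hlog : Tendsto (fun δ : ℝ => Real.log (1 / δ)) (𝓝[>] 0) atTop := by
    simpa only [one_div, Real.log_inv, Function.comp_def] using
      tendsto_neg_atBot_atTop.comp Real.tendsto_log_nhdsGT_zero
  simpa using tendsto_const_nhds.add (tendsto_const_nhds.div_atTop hlog)

lemma exists_log_coveringNumber_div_le (hs : Bornology.IsBounded s) :
    ∃ C, (fun δ => Real.log (coveringNumber δ s).toNat / Real.log (1 / δ)) ≤ᶠ[𝓝[>] 0]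
      fun δ => 1 + C / Real.log (1 / δ) := by
  obtain ⟨C, hC⟩ := exists_log_coveringNumber_le hs
  refine ⟨C, eventually_of_mem (Ioo_mem_nhdsGT one_pos) fun δ hδ => ?_⟩
  have hlog : 0 < Real.log (1 / δ) := Real.log_pos ((one_lt_div hδ.1).2 hδ.2)
  rw [div_le_iff₀ hlog, add_mul, one_mul, div_mul_cancel₀ _ hlog.ne', add_comm]
  exact hC δ hδ

lemma isBoundedUnder_log_coveringNumber_div (hs : Bornology.IsBounded s) :
    IsBoundedUnder (· ≤ ·) (𝓝[>] 0)
      (fun δ => Real.log (coveringNumber δ s).toNat / Real.log (1 / δ)) :=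
  let ⟨C, hC⟩ := exists_log_coveringNumber_div_le hs
  (tendsto_one_add_div_log_one_div C).isBoundedUnder_le.mono_le hC

lemma upperBoxDim_le_one (hs : Bornology.IsBounded s) : upperBoxDim s ≤ 1 := by
  obtain ⟨C, hC⟩ := exists_log_coveringNumber_div_le hs
  have hnonneg : ∀ᶠ δ in 𝓝[>] (0 : ℝ),
      0 ≤ Real.log (coveringNumber δ s).toNat / Real.log (1 / δ) :=
    eventually_of_mem (Ioo_mem_nhdsGT one_pos) fun δ hδ =>
      div_nonneg (Real.log_natCast_nonneg _) (Real.log_nonneg ((one_le_div hδ.1).2 hδ.2.le))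
  exact (limsup_le_limsup hC (isCoboundedUnder_le_of_eventually_le _ hnonneg)
    (tendsto_one_add_div_log_one_div C).isBoundedUnder_le).trans_eq
    (tendsto_one_add_div_log_one_div C).limsup_eq

lemma eventually_exists_cover_card_le_rpow (hs : Bornology.IsBounded s) {d : ℝ}
    (hd : upperBoxDim s < d) :
    ∀ᶠ δ in 𝓝[>] 0, ∃ t : Finset ℝ, s ⊆ ⋃ x ∈ t, ball x δ ∧ (t.card : ℝ) ≤ δ ^ (-d) := by
  filter_upwards [eventually_lt_of_limsup_lt hd (isBoundedUnder_log_coveringNumber_div hs),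
    Ioo_mem_nhdsGT one_pos] with δ hlt hδ
  obtain ⟨t, ht, hcard⟩ := exists_finset_card_eq_coveringNumber (coveringNumber_ne_top hs hδ.1)
  refine ⟨t, ht, ?_⟩
  rw [← hcard, ENat.toNat_natCast] at hlt
  rcases Nat.eq_zero_or_pos t.card with h0 | hpos
  · rw [h0, Nat.cast_zero]
    exact (Real.rpow_pos_of_pos hδ.1 _).le
  have hlog : 0 < Real.log (1 / δ) := Real.log_pos ((one_lt_div hδ.1).2 hδ.2)
  rw [div_lt_iff₀ hlog] at hlt
  calc (t.card : ℝ) = Real.exp (Real.log t.card) := (Real.exp_log (by positivity)).symm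
    _ ≤ Real.exp (d * Real.log (1 / δ)) := Real.exp_le_exp.2 hlt.le
    _ = δ ^ (-d) := by
        rw [Real.rpow_def_of_pos hδ.1, one_div, Real.log_inv]
        ring_nf

end BoxDimension

section ProductCover

variable {X Y : Type*}

lemma ediam_prod_le [PseudoEMetricSpace X] [PseudoEMetricSpace Y] (A : Set X) (B : Set Y) :
    ediam (A ×ˢ B) ≤ max (ediam A) (ediam B) :=
  Metric.ediam_le fun _ ⟨hx₁, hy₁⟩ _ ⟨hx₂, hy₂⟩ => (Prod.edist_eq _ _).trans_le <|
    max_le_max (Metric.edist_le_ediam_of_mem hx₁ hx₂) (Metric.edist_le_ediam_of_mem hy₁ hy₂)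

lemma ediam_prod_ball_le [PseudoEMetricSpace X] [PseudoMetricSpace Y] {A : Set X} {ρ : ℝ}
    (hA : ediam A ≤ ENNReal.ofReal ρ) (y : Y) :
    ediam (A ×ˢ ball y ρ) ≤ ENNReal.ofReal (2 * ρ) := by
  have hball : ediam (ball y ρ) ≤ ENNReal.ofReal (2 * ρ) := by
    rw [← Metric.eball_ofReal, ENNReal.ofReal_mul zero_le_two, ENNReal.ofReal_ofNat]
    exact Metric.ediam_eball_le
  have hρ : ENNReal.ofReal ρ ≤ ENNReal.ofReal (2 * ρ) := by
    rcases le_or_gt 0 ρ with h | h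
    · exact ENNReal.ofReal_le_ofReal (by linarith)
    · simp [ENNReal.ofReal_of_nonpos h.le]
  exact (ediam_prod_le _ _).trans (max_le (hA.trans hρ) hball)

lemma mkMetric'_pre_prod_le [EMetricSpace X] [MetricSpace Y] {A : Set X} {F : Set Y}
    {ρ p : ℝ} {t : Finset Y} {r : ℝ≥0∞} (hp : 0 ≤ p) (hA : ediam A ≤ ENNReal.ofReal ρ)
    (hF : F ⊆ ⋃ y ∈ t, ball y ρ) (hr : ENNReal.ofReal (2 * ρ) ≤ r) :
    OuterMeasure.mkMetric'.pre (fun S : Set (X × Y) => ediam S ^ p) r (A ×ˢ F) ≤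
      t.card * ENNReal.ofReal (2 * ρ) ^ p := by
  have hcover : A ×ˢ F ⊆ ⋃ y ∈ t, A ×ˢ ball y ρ := by
    rw [← prod_iUnion₂]
    exact prod_mono subset_rfl hF
  calc _ ≤ ∑ y ∈ t, OuterMeasure.mkMetric'.pre (fun S : Set (X × Y) => ediam S ^ p) r
          (A ×ˢ ball y ρ) := (measure_mono hcover).trans (measure_biUnion_finset_le _ _)
    _ ≤ ∑ _y ∈ t, ENNReal.ofReal (2 * ρ) ^ p := by
        gcongr with y
        have hdiam := ediam_prod_ball_le hA y
        exact (OuterMeasure.mkMetric'.pre_le (hdiam.trans hr)).trans (by gcongr)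
    _ = t.card * ENNReal.ofReal (2 * ρ) ^ p := by rw [Finset.sum_const, nsmul_eq_mul]

end ProductCover

section Hausdorff

variable {X : Type*} [EMetricSpace X] [MeasurableSpace X] [BorelSpace X]

lemma hausdorffMeasure_eq_iSup_mkMetric'_pre (p : ℝ) (S : Set X) :
    μH[p] S = ⨆ r > 0, OuterMeasure.mkMetric'.pre (fun T : Set X => ediam T ^ p) r S := by
  rw [Measure.hausdorffMeasure, ← OuterMeasure.coe_mkMetric, OuterMeasure.mkMetric,
    OuterMeasure.mkMetric']
  simp only [OuterMeasure.iSup_apply]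

lemma exists_cover_tsum_ediam_rpow_lt {E : Set X} {p : ℝ} {c : ℝ≥0∞} (h : μH[p] E < c)
    {r : ℝ≥0∞} (hr : 0 < r) :
    ∃ U : ℕ → Set X, E ⊆ ⋃ n, U n ∧ (∀ n, ediam (U n) ≤ r) ∧
      ∑' n, ⨆ _ : (U n).Nonempty, ediam (U n) ^ p < c := by
  rw [Measure.hausdorffMeasure_apply] at h
  simpa only [iInf_lt_iff, exists_prop] using (le_iSup₂ (f := fun r (_ : 0 < r) =>
    ⨅ (U : ℕ → Set X) (_ : E ⊆ ⋃ n, U n) (_ : ∀ n, ediam (U n) ≤ r),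
      ∑' n, ⨆ _ : (U n).Nonempty, ediam (U n) ^ p) r hr).trans_lt h

end Hausdorff

section ProductHausdorff

variable {X Y : Type*} [EMetricSpace X] [MetricSpace Y]

lemma exists_pos_le_rpow_le {s a b : ℝ} (hs : 0 < s) (ha : 0 < a) (hb : 0 < b) :
    ∃ τ, 0 < τ ∧ τ ≤ b ∧ τ ^ s ≤ a :=
  ⟨min b (a ^ s⁻¹), lt_min hb (Real.rpow_pos_of_pos ha _), min_le_left _ _,
    (Real.rpow_le_rpow (by positivity) (min_le_right _ _) hs.le).trans_eq
      (Real.rpow_inv_rpow ha.le hs.ne')⟩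

lemma mkMetric'_pre_prod_le_of_ediam_le {A : Set X} {F : Set Y} {s d δ₀ r₀ η : ℝ} {r : ℝ≥0∞}
    (hs : 0 < s) (hd : 0 ≤ d)
    (hF : ∀ δ ∈ Ioo 0 δ₀, ∃ t : Finset Y, F ⊆ ⋃ y ∈ t, ball y δ ∧ (t.card : ℝ) ≤ δ ^ (-d))
    (hr₀ : r₀ ∈ Ioo 0 δ₀) (hr : ENNReal.ofReal (2 * r₀) ≤ r) (hA : ediam A ≤ ENNReal.ofReal r₀)
    (hη : 0 < η) :
    OuterMeasure.mkMetric'.pre (fun S : Set (X × Y) => ediam S ^ (s + d)) r (A ×ˢ F) ≤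
      ENNReal.ofReal (2 ^ (s + d)) * (ediam A ^ s + ENNReal.ofReal η) := by
  obtain ⟨τ, hτ, hτr₀, hτη⟩ := exists_pos_le_rpow_le hs hη hr₀.1
  set D := (ediam A).toReal
  -- `τ` keeps the scale positive when `diam A = 0`, at the price `τ ^ s ≤ η`
  set ρ := max D τ
  have hρ : 0 < ρ := hτ.trans_le (le_max_right _ _)
  have hρr₀ : ρ ≤ r₀ := max_le (ENNReal.toReal_le_of_le_ofReal hr₀.1.le hA) hτr₀
  have hAD : ediam A = ENNReal.ofReal D :=
    (ENNReal.ofReal_toReal (ne_top_of_le_ne_top ofReal_ne_top hA)).symm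
  obtain ⟨t, hFt, hcard⟩ := hF ρ ⟨hρ, hρr₀.trans_lt hr₀.2⟩
  have hρs : ρ ^ s ≤ D ^ s + η := by
    have hD : 0 ≤ D ^ s := Real.rpow_nonneg ENNReal.toReal_nonneg _
    rcases max_choice D τ with h | h <;> simp only [ρ, h] <;> linarith
  have hscale : ρ ^ (-d) * (2 * ρ) ^ (s + d) = 2 ^ (s + d) * ρ ^ s := by
    rw [Real.mul_rpow zero_le_two hρ.le, Real.rpow_add hρ, Real.rpow_neg hρ.le]
    field_simp
  calc _ ≤ t.card * ENNReal.ofReal (2 * ρ) ^ (s + d) :=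
        mkMetric'_pre_prod_le (by linarith)
          (hAD.trans_le (ENNReal.ofReal_le_ofReal (le_max_left _ _))) hFt
          ((ENNReal.ofReal_le_ofReal (by linarith)).trans hr)
    _ ≤ ENNReal.ofReal (ρ ^ (-d) * (2 * ρ) ^ (s + d)) := by
        rw [ENNReal.ofReal_rpow_of_nonneg (by positivity) (by linarith),
          ENNReal.ofReal_mul (by positivity), ← ENNReal.ofReal_natCast]
        gcongr
    _ ≤ ENNReal.ofReal (2 ^ (s + d) * (D ^ s + η)) := by
        rw [hscale]
        gcongr
    _ = _ := by
        rw [ENNReal.ofReal_mul (by positivity), ENNReal.ofReal_add (by positivity) hη.le, hAD,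
          ENNReal.ofReal_rpow_of_nonneg ENNReal.toReal_nonneg hs.le]

lemma mkMetric'_pre_prod_le_tsum {E : Set X} {F : Set Y} {s d δ₀ r₀ : ℝ} {r : ℝ≥0∞}
    (hs : 0 < s) (hd : 0 ≤ d)
    (hF : ∀ δ ∈ Ioo 0 δ₀, ∃ t : Finset Y, F ⊆ ⋃ y ∈ t, ball y δ ∧ (t.card : ℝ) ≤ δ ^ (-d))
    (hr₀ : r₀ ∈ Ioo 0 δ₀) (hr : ENNReal.ofReal (2 * r₀) ≤ r) {U : ℕ → Set X}
    (hEU : E ⊆ ⋃ n, U n) (hU : ∀ n, ediam (U n) ≤ ENNReal.ofReal r₀) {η : ℕ → ℝ≥0}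
    (hη : ∀ n, 0 < η n) :
    OuterMeasure.mkMetric'.pre (fun S : Set (X × Y) => ediam S ^ (s + d)) r (E ×ˢ F) ≤
      ENNReal.ofReal (2 ^ (s + d)) * ∑' n, (ediam (U n) ^ s + η n) := by
  calc _ ≤ OuterMeasure.mkMetric'.pre (fun S : Set (X × Y) => ediam S ^ (s + d)) r
          (⋃ n, U n ×ˢ F) := measure_mono (iUnion_prod_const ▸ prod_mono hEU subset_rfl)
    _ ≤ ∑' n, OuterMeasure.mkMetric'.pre (fun S : Set (X × Y) => ediam S ^ (s + d)) r
          (U n ×ˢ F) := measure_iUnion_le _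
    _ ≤ ∑' n, ENNReal.ofReal (2 ^ (s + d)) * (ediam (U n) ^ s + η n) :=
        ENNReal.tsum_le_tsum fun n => ENNReal.ofReal_coe_nnreal (p := η n) ▸
          mkMetric'_pre_prod_le_of_ediam_le hs hd hF hr₀ hr (hU n) (hη n)
    _ = _ := ENNReal.tsum_mul_left

theorem hausdorffMeasure_prod_le [MeasurableSpace X] [BorelSpace X] [MeasurableSpace (X × Y)]
    [BorelSpace (X × Y)] (E : Set X) {F : Set Y} {s d : ℝ} (hs : 0 < s) (hd : 0 ≤ d)
    (hF : ∀ᶠ δ in 𝓝[>] 0, ∃ t : Finset Y, F ⊆ ⋃ y ∈ t, ball y δ ∧ (t.card : ℝ) ≤ δ ^ (-d)) :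
    μH[s + d] (E ×ˢ F) ≤ ENNReal.ofReal (2 ^ (s + d)) * μH[s] E := by
  obtain ⟨δ₀, hδ₀, hF⟩ := (nhdsGT_basis 0).eventually_iff.1 hF
  have hC : ENNReal.ofReal (2 ^ (s + d)) ≠ 0 := (ENNReal.ofReal_pos.2 (by positivity)).ne'
  rw [mul_comm, ← ENNReal.div_le_iff_le_mul (Or.inl hC) (Or.inl ofReal_ne_top)]
  refine le_of_forall_gt_imp_ge_of_dense fun c hc => ?_
  rw [ENNReal.div_le_iff_le_mul (Or.inl hC) (Or.inl ofReal_ne_top), mul_comm,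
    hausdorffMeasure_eq_iSup_mkMetric'_pre]
  refine iSup₂_le fun r hr => ?_
  obtain ⟨c', hc', hc'c⟩ := exists_between hc
  obtain ⟨η, hη, hηc⟩ := ENNReal.exists_pos_sum_of_countable (tsub_pos_of_lt hc'c).ne' ℕ
  obtain ⟨q, -, hq, hqr⟩ := ENNReal.lt_iff_exists_real_btwn.1 hr
  have hq : 0 < q := ENNReal.ofReal_pos.1 hq
  have hr₀ : min (q / 2) (δ₀ / 2) ∈ Ioo 0 δ₀ := ⟨by positivity, by
    linarith [min_le_right (q / 2) (δ₀ / 2)]⟩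
  have hr₀r : ENNReal.ofReal (2 * min (q / 2) (δ₀ / 2)) ≤ r :=
    (ENNReal.ofReal_le_ofReal (by linarith [min_le_left (q / 2) (δ₀ / 2)])).trans hqr.le
  obtain ⟨U, hEU, hU, hUc⟩ := exists_cover_tsum_ediam_rpow_lt hc' (ENNReal.ofReal_pos.2 hr₀.1)
  have hUs : ∀ n, (⨆ _ : (U n).Nonempty, ediam (U n) ^ s) = ediam (U n) ^ s := fun n => by
    rcases (U n).eq_empty_or_nonempty with h | h <;> simp [h, hs]
  refine (mkMetric'_pre_prod_le_tsum hs hd hF hr₀ hr₀r hEU hU hη).trans (mul_le_mul_right ?_ _)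
  calc ∑' n, (ediam (U n) ^ s + η n) = ∑' n, (⨆ _ : (U n).Nonempty, ediam (U n) ^ s) +
        ∑' n, (η n : ℝ≥0∞) := by simp only [hUs, ENNReal.tsum_add]
    _ ≤ c' + (c - c') := add_le_add hUc.le hηc.le
    _ = c := add_tsub_cancel_of_le hc'c.le

end ProductHausdorff

theorem dimH_prod_le_of_eventually_cover {X Y : Type*} [EMetricSpace X] [MetricSpace Y]
    (E : Set X) {F : Set Y} {d : ℝ≥0}
    (hF : ∀ᶠ δ in 𝓝[>] 0, ∃ t : Finset Y, F ⊆ ⋃ y ∈ t, ball y δ ∧ (t.card : ℝ) ≤ δ ^ (-(d : ℝ))) :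
    dimH (E ×ˢ F) ≤ dimH E + d := by
  borelize X (X × Y)
  refine ENNReal.le_of_forall_pos_le_add fun ε hε hlt => ?_
  have hE : dimH E ≠ ⊤ := (lt_of_le_of_lt le_self_add hlt).ne
  set s : ℝ≥0 := (dimH E).toNNReal + ε
  have hEs : dimH E < s := by
    rw [ENNReal.coe_add, ENNReal.coe_toNNReal hE]
    exact ENNReal.lt_add_right hE (ENNReal.coe_ne_zero.2 hε.ne')
  have hnull : μH[(s : ℝ) + d] (E ×ˢ F) = 0 := by
    refine le_antisymm ?_ zero_le
    calc _ ≤ ENNReal.ofReal (2 ^ ((s : ℝ) + d)) * μH[s] E :=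
          hausdorffMeasure_prod_le E (hε.trans_le (by simp [s])) d.2 hF
      _ = 0 := by rw [hausdorffMeasure_of_dimH_lt hEs, mul_zero]
  calc dimH (E ×ˢ F) ≤ (s + d : ℝ≥0) :=
        dimH_le_of_hausdorffMeasure_ne_top (by rw [NNReal.coe_add, hnull]; exact zero_ne_top)
    _ = dimH E + d + ε := by
        rw [ENNReal.coe_add, ENNReal.coe_add, ENNReal.coe_toNNReal hE, add_right_comm]

theorem dimH_prod_le_add_upperBoxDim {X : Type*} [EMetricSpace X] (E : Set X) {I : Set ℝ}
    (hI : Bornology.IsBounded I) : dimH (E ×ˢ I) ≤ dimH E + ENNReal.ofReal (upperBoxDim I) := by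
  refine ENNReal.le_of_forall_pos_le_add fun ε hε _ => ?_
  have hd : upperBoxDim I < ((upperBoxDim I).toNNReal + ε : ℝ≥0) := by
    push_cast
    linarith [Real.le_coe_toNNReal (upperBoxDim I)]
  calc _ ≤ dimH E + ((upperBoxDim I).toNNReal + ε : ℝ≥0) :=
        dimH_prod_le_of_eventually_cover E (eventually_exists_cover_card_le_rpow hI hd)
    _ = dimH E + ENNReal.ofReal (upperBoxDim I) + ε := by
        rw [ENNReal.coe_add, ← add_assoc]
        rfl

/-- For `E` in a metric space and a compact `I ⊆ ℝ` with upper box-counting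
dimension `D(I)`, one has `HD(E × I) ≤ HD(E) + D(I)` (product with the max metric).
In particular, for a nondegenerate compact interval, `HD(E × [a,b]) ≤ HD(E) + 1`. -/
theorem stmt8 {X : Type*} [MetricSpace X] (E : Set X) (I : Set ℝ) (hI : IsCompact I) :
    dimH (E ×ˢ I) ≤ dimH E + ENNReal.ofReal (upperBoxDim I) ∧
      ∀ a b : ℝ, a < b → dimH (E ×ˢ Set.Icc a b) ≤ dimH E + 1 := by
  refine ⟨dimH_prod_le_add_upperBoxDim E hI.isBounded, fun a b _ => ?_⟩
  have hIcc : Bornology.IsBounded (Set.Icc a b) := Metric.isBounded_Icc a b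
  calc dimH (E ×ˢ Set.Icc a b) ≤ dimH E + ENNReal.ofReal (upperBoxDim (Set.Icc a b)) :=
        dimH_prod_le_add_upperBoxDim E hIcc
    _ ≤ dimH E + 1 := by
        gcongr
        exact ENNReal.ofReal_le_one.2 (upperBoxDim_le_one hIcc)
end
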